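/- Let 0 ≤ θ₀ ≤ 1/2, θ₀ < θ ≤ 1, m > 1, let a ≥ 0 be measurable on (0,∞), and let the symmetric measurable kernel k satisfy hypothesis (K1) with constant k_*. Then for every r > 1 and every nonnegative measurable ψ: (1/2)∫₀¹∫₀¹ [w_r(x+y) − w_r(x) − w_r(y)]·k(x,y)ψ(x)ψ(y) dy dx ≤ r(r+3)·2^{(r−3)₊}·k_*·M₁(ψ)². -/

import Mathlib

open MeasureTheory Set Real
open scoped ENNReal

/-- The weight `ℓ`: `ℓ(x) = x^(1-2θ₀)` for `x ∈ (0,1)` and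
`ℓ(x) = (1+a(x))^θ · x^m` for `x > 1`. -/
noncomputable def ell (a : ℝ → ℝ) (θ₀ θ m : ℝ) (x : ℝ) : ℝ :=
  if x < 1 then x ^ (1 - 2 * θ₀) else (1 + a x) ^ θ * x ^ m

/-- The weight `w_r`: `w_r(x) = ((r−1)/2)x³` on `[0,1]` and
`w_r(x) = x^r + ((r−3)/2)x` for `x > 1`. -/
noncomputable def wgt (r x : ℝ) : ℝ :=
  if x ≤ 1 then ((r - 1) / 2) * x ^ 3 else x ^ r + ((r - 3) / 2) * x

lemma key_poly (r x y : ℝ) (hr : 1 < r) (hx : 0 < x) (hx1 : x < 1)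
    (hy : 0 < y) (hy1 : y < 1) (hs : 1 < x + y) :
    (x + y) ^ r + (r - 3) / 2 * (x + y) - ((r - 1) / 2 * x ^ 3 + (r - 1) / 2 * y ^ 3)
      ≤ ((2 : ℝ) ^ r + 2 * r - 3) * (x * y) := by
  have h2r : (2 : ℝ) ≤ (2 : ℝ) ^ r := by
    nth_rewrite 1 [show (2:ℝ) = (2:ℝ) ^ (1:ℝ) by rw [Real.rpow_one]]
    exact Real.rpow_le_rpow_of_exponent_le (by norm_num) hr.le
  have hconv := (convexOn_rpow hr.le).2 (by norm_num : (1:ℝ) ∈ Ici (0:ℝ))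
    (by norm_num : (2:ℝ) ∈ Ici (0:ℝ)) (by linarith : (0:ℝ) ≤ 2 - (x + y))
    (by linarith : (0:ℝ) ≤ (x + y) - 1) (by ring)
  simp only [smul_eq_mul, Real.one_rpow] at hconv
  have h1 : (x + y) ^ r ≤ (2 - (x + y)) + ((x + y) - 1) * (2:ℝ) ^ r := by
    have : (2 - (x+y)) * 1 + ((x+y) - 1) * 2 = x + y := by ring
    rw [this] at hconv
    linarith
  nlinarith [mul_nonneg hx.le (sq_nonneg (x - 1)), mul_nonneg hy.le (sq_nonneg (y - 1)),
    mul_nonneg (by linarith : (0:ℝ) ≤ x + y - 1) (by nlinarith : (0:ℝ) ≤ (r-1)*(x+y) + 1),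
    mul_nonneg (by linarith : (0:ℝ) ≤ (2:ℝ)^r - 1) (by nlinarith : (0:ℝ) ≤ x*y - (x + y - 1))]

lemma core_bound (r kstar kv x y : ℝ) (hr : 1 < r) (hkstar : 0 < kstar)
    (hx : 0 < x) (hx1 : x < 1) (hy : 0 < y) (hy1 : y < 1)
    (hkv0 : 0 ≤ kv) (hkv : kv ≤ kstar / (x + y)) :
    (wgt r (x + y) - wgt r x - wgt r y) * kv
      ≤ 2 * (r * (r + 3) * (2 : ℝ) ^ max (r - 3) 0 * kstar) * (x * y) := by
  set P : ℝ := (2 : ℝ) ^ max (r - 3) 0 with hPdef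
  have hP1 : (1 : ℝ) ≤ P := Real.one_le_rpow (by norm_num) (le_max_right _ _)
  have h8P : (2 : ℝ) ^ r ≤ 8 * P := by
    have h1 : (2 : ℝ) ^ r = (2:ℝ) ^ (3:ℝ) * (2:ℝ) ^ (r - 3) := by
      rw [← Real.rpow_add (by norm_num)]; ring_nf
    have h2 : (2:ℝ) ^ (r - 3) ≤ P := Real.rpow_le_rpow_of_exponent_le (by norm_num) (le_max_left _ _)
    have h3 : (2:ℝ) ^ (3:ℝ) = 8 := by
      rw [show (3:ℝ) = ((3:ℕ):ℝ) by norm_num, Real.rpow_natCast]; norm_num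
    rw [h1, h3]; linarith
  have hxy : 0 < x * y := mul_pos hx hy
  by_cases hs : x + y ≤ 1
  · have e : wgt r (x + y) - wgt r x - wgt r y = (3 * (r - 1) / 2) * (x * y) * (x + y) := by
      simp only [wgt, if_pos hs, if_pos hx1.le, if_pos hy1.le]; ring
    have hd0 : 0 ≤ (3 * (r - 1) / 2) * (x * y) * (x + y) := by
      apply mul_nonneg (mul_nonneg (by linarith) hxy.le) (by linarith)
    rw [e]
    calc (3 * (r - 1) / 2) * (x * y) * (x + y) * kv
        ≤ (3 * (r - 1) / 2) * (x * y) * (x + y) * (kstar / (x + y)) :=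
          mul_le_mul_of_nonneg_left hkv hd0
      _ = (3 * (r - 1) / 2) * (x * y) * kstar := by
          field_simp
      _ ≤ 2 * (r * (r + 3) * P * kstar) * (x * y) := by
          have key : 3 * (r - 1) / 2 ≤ 2 * (r * (r + 3) * P) := by
            nlinarith [mul_nonneg (by nlinarith : (0:ℝ) ≤ P - 1) (by nlinarith : (0:ℝ) ≤ r * (r+3))]
          nlinarith [mul_le_mul_of_nonneg_right key (mul_pos hxy hkstar).le]
  · push_neg at hs
    have hkv' : kv ≤ kstar := le_trans hkv (by
      rw [div_le_iff₀ (by linarith)]; nlinarith)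
    have e : wgt r (x + y) - wgt r x - wgt r y
        = (x + y) ^ r + (r - 3) / 2 * (x + y) - ((r - 1) / 2 * x ^ 3 + (r - 1) / 2 * y ^ 3) := by
      simp only [wgt, if_neg (not_le.mpr hs), if_pos hx1.le, if_pos hy1.le]; ring
    rw [e]
    set D := (x + y) ^ r + (r - 3) / 2 * (x + y) - ((r - 1) / 2 * x ^ 3 + (r - 1) / 2 * y ^ 3) with hD
    have hDle : D ≤ ((2 : ℝ) ^ r + 2 * r - 3) * (x * y) :=
      key_poly r x y hr hx hx1 hy hy1 hs
    by_cases hD0 : D ≤ 0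
    · have h1 : D * kv ≤ 0 := mul_nonpos_of_nonpos_of_nonneg hD0 hkv0
      have hR : 0 ≤ 2 * (r * (r + 3) * P * kstar) * (x * y) := by
        apply mul_nonneg (mul_nonneg (by norm_num) _) hxy.le
        apply mul_nonneg (mul_nonneg (mul_nonneg (by linarith) (by linarith)) (by linarith)) hkstar.le
      linarith
    · push_neg at hD0
      calc D * kv ≤ D * kstar := mul_le_mul_of_nonneg_left hkv' hD0.le
        _ ≤ ((2 : ℝ) ^ r + 2 * r - 3) * (x * y) * kstar :=
            mul_le_mul_of_nonneg_right hDle hkstar.le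
        _ ≤ 2 * (r * (r + 3) * P * kstar) * (x * y) := by
            have key : (2 : ℝ) ^ r + 2 * r - 3 ≤ 2 * (r * (r + 3) * P) := by
              nlinarith [mul_nonneg (by nlinarith : (0:ℝ) ≤ P - 1) (by nlinarith : (0:ℝ) ≤ 2 * r * (r+3) - 8)]
            nlinarith [mul_le_mul_of_nonneg_right key (mul_pos hxy hkstar).le]

/-- under (K1) with `θ₀ ∈ [0,1/2]`, for every `r > 1` and `ψ ≥ 0`,
`(1/2)∫₀¹∫₀¹ [w_r(x+y) − w_r(x) − w_r(y)] k(x,y)ψ(x)ψ(y) dy dx ≤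
  r(r+3) 2^{(r−3)₊} k_* M₁(ψ)²`. -/
theorem small_small_coag_estimate (a : ℝ → ℝ) (θ₀ θ m kstar r : ℝ)
    (k : ℝ → ℝ → ℝ) (ψ : ℝ → ℝ)
    (hθ₀0 : 0 ≤ θ₀) (hθ₀ : θ₀ ≤ 1 / 2) (hθ₀θ : θ₀ < θ) (hθ : θ ≤ 1) (hm : 1 < m)
    (ha : Measurable a) (ha0 : ∀ x ∈ Ioi (0 : ℝ), 0 ≤ a x)
    (hkm : Measurable (Function.uncurry k))
    (hksym : ∀ x y : ℝ, 0 < x → 0 < y → k x y = k y x)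
    (hknn : ∀ x y : ℝ, 0 < x → 0 < y → 0 ≤ k x y)
    (hkstar : 0 < kstar)
    (hK1 : ∀ x y : ℝ, 0 < x → 0 < y →
      k x y ≤ kstar * ell a θ₀ θ m x * ell a θ₀ θ m y / (x + y + (x + y) ^ m))
    (hr : 1 < r)
    (hψm : Measurable ψ) (hψ0 : ∀ x ∈ Ioi (0 : ℝ), 0 ≤ ψ x) :
    (1 / 2 : ℝ≥0∞) * ∫⁻ x in Ioo (0 : ℝ) 1, ∫⁻ y in Ioo (0 : ℝ) 1,
        ENNReal.ofReal ((wgt r (x + y) - wgt r x - wgt r y) * (k x y * ψ x * ψ y)) ≤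
      ENNReal.ofReal (r * (r + 3) * (2 : ℝ) ^ max (r - 3) 0 * kstar) *
        (∫⁻ x in Ioi (0 : ℝ), ENNReal.ofReal (x * ψ x)) ^ 2 := by
  set B : ℝ := r * (r + 3) * (2 : ℝ) ^ max (r - 3) 0 * kstar with hBdef
  have hP0 : (0:ℝ) < (2 : ℝ) ^ max (r - 3) 0 := Real.rpow_pos_of_pos (by norm_num) _
  have hB : 0 ≤ B := by
    apply mul_nonneg (mul_nonneg (mul_nonneg (by linarith) (by linarith)) hP0.le) hkstar.le
  have h2B : (0:ℝ) ≤ 2 * B := by linarith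
  set I : ℝ≥0∞ := ∫⁻ y in Ioo (0:ℝ) 1, ENNReal.ofReal (y * ψ y) with hIdef
  set J : ℝ≥0∞ := ∫⁻ x in Ioi (0:ℝ), ENNReal.ofReal (x * ψ x) with hJdef
  have hmeas : Measurable fun y : ℝ => ENNReal.ofReal (y * ψ y) :=
    (measurable_id.mul hψm).ennreal_ofReal
  -- pointwise kernel bound
  have hkb : ∀ x ∈ Ioo (0:ℝ) 1, ∀ y ∈ Ioo (0:ℝ) 1, k x y ≤ kstar / (x + y) := by
    intro x hx y hy
    have hxl : ell a θ₀ θ m x ≤ 1 := by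
      rw [ell, if_pos hx.2]
      exact Real.rpow_le_one hx.1.le hx.2.le (by linarith)
    have hyl : ell a θ₀ θ m y ≤ 1 := by
      rw [ell, if_pos hy.2]
      exact Real.rpow_le_one hy.1.le hy.2.le (by linarith)
    have hxl0 : 0 ≤ ell a θ₀ θ m x := by
      rw [ell, if_pos hx.2]; exact Real.rpow_nonneg hx.1.le _
    have hyl0 : 0 ≤ ell a θ₀ θ m y := by
      rw [ell, if_pos hy.2]; exact Real.rpow_nonneg hy.1.le _
    refine le_trans (hK1 x y hx.1 hy.1) ?_
    have hden : x + y ≤ x + y + (x + y) ^ m := by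
      have : (0:ℝ) ≤ (x + y) ^ m := Real.rpow_nonneg (by linarith [hx.1, hy.1]) _
      linarith
    have hnum : kstar * ell a θ₀ θ m x * ell a θ₀ θ m y ≤ kstar := by
      have h11 : ell a θ₀ θ m x * ell a θ₀ θ m y ≤ 1 := by nlinarith
      nlinarith [mul_le_mul_of_nonneg_left h11 hkstar.le]
    exact div_le_div₀ hkstar.le hnum (by linarith [hx.1, hy.1]) hden
  -- pointwise full bound
  have hpt : ∀ x ∈ Ioo (0:ℝ) 1, ∀ y ∈ Ioo (0:ℝ) 1,
      (wgt r (x + y) - wgt r x - wgt r y) * (k x y * ψ x * ψ y)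
        ≤ (2 * B * (x * ψ x)) * (y * ψ y) := by
    intro x hx y hy
    have h1 : (wgt r (x + y) - wgt r x - wgt r y) * k x y ≤ 2 * B * (x * y) :=
      core_bound r kstar (k x y) x y hr hkstar hx.1 hx.2 hy.1 hy.2
        (hknn x y hx.1 hy.1) (hkb x hx y hy)
    have hpx : 0 ≤ ψ x := hψ0 x hx.1
    have hpy : 0 ≤ ψ y := hψ0 y hy.1
    calc (wgt r (x + y) - wgt r x - wgt r y) * (k x y * ψ x * ψ y)
        = ((wgt r (x + y) - wgt r x - wgt r y) * k x y) * (ψ x * ψ y) := by ring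
      _ ≤ (2 * B * (x * y)) * (ψ x * ψ y) :=
          mul_le_mul_of_nonneg_right h1 (mul_nonneg hpx hpy)
      _ = (2 * B * (x * ψ x)) * (y * ψ y) := by ring
  -- inner integral bound
  have hinner : ∀ x ∈ Ioo (0:ℝ) 1,
      (∫⁻ y in Ioo (0:ℝ) 1,
        ENNReal.ofReal ((wgt r (x + y) - wgt r x - wgt r y) * (k x y * ψ x * ψ y)))
        ≤ ENNReal.ofReal (2 * B * (x * ψ x)) * I := by
    intro x hx
    have hx0 : 0 ≤ x * ψ x := mul_nonneg hx.1.le (hψ0 x hx.1)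
    calc (∫⁻ y in Ioo (0:ℝ) 1,
          ENNReal.ofReal ((wgt r (x + y) - wgt r x - wgt r y) * (k x y * ψ x * ψ y)))
        ≤ ∫⁻ y in Ioo (0:ℝ) 1,
            ENNReal.ofReal (2 * B * (x * ψ x)) * ENNReal.ofReal (y * ψ y) := by
          apply setLIntegral_mono (measurable_const.mul hmeas)
          intro y hy
          rw [Pi.mul_apply]
          rw [← ENNReal.ofReal_mul (by nlinarith)]
          exact ENNReal.ofReal_le_ofReal (hpt x hx y hy)
      _ = ENNReal.ofReal (2 * B * (x * ψ x)) * I := lintegral_const_mul _ hmeas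
  -- outer integral bound
  have houter : (∫⁻ x in Ioo (0:ℝ) 1, ∫⁻ y in Ioo (0:ℝ) 1,
        ENNReal.ofReal ((wgt r (x + y) - wgt r x - wgt r y) * (k x y * ψ x * ψ y)))
        ≤ ENNReal.ofReal (2 * B) * I * I := by
    calc (∫⁻ x in Ioo (0:ℝ) 1, ∫⁻ y in Ioo (0:ℝ) 1,
          ENNReal.ofReal ((wgt r (x + y) - wgt r x - wgt r y) * (k x y * ψ x * ψ y)))
        ≤ ∫⁻ x in Ioo (0:ℝ) 1, ENNReal.ofReal (2 * B * (x * ψ x)) * I := by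
          apply setLIntegral_mono
            (((measurable_const.mul (measurable_id.mul hψm)).ennreal_ofReal).mul measurable_const)
          exact hinner
      _ = ∫⁻ x in Ioo (0:ℝ) 1, (ENNReal.ofReal (2 * B) * I) * ENNReal.ofReal (x * ψ x) := by
          apply lintegral_congr
          intro x
          rw [ENNReal.ofReal_mul h2B]
          ring
      _ = (ENNReal.ofReal (2 * B) * I) * I := lintegral_const_mul _ hmeas
  have hIJ : I ≤ J := lintegral_mono_set Ioo_subset_Ioi_self
  have hhalf : (1/2 : ℝ≥0∞) * (ENNReal.ofReal (2 * B) * I * I) = ENNReal.ofReal B * I * I := by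
    rw [ENNReal.ofReal_mul (by norm_num : (0:ℝ) ≤ 2)]
    rw [show ENNReal.ofReal (2:ℝ) = 2 by norm_num]
    rw [show (1/2 : ℝ≥0∞) * (2 * ENNReal.ofReal B * I * I)
        = ((1/2 : ℝ≥0∞) * 2) * (ENNReal.ofReal B * I * I) by ring]
    rw [show (1/2 : ℝ≥0∞) * 2 = 1 by
      rw [one_div, ENNReal.inv_mul_cancel (by norm_num) (by norm_num)]]
    rw [one_mul, mul_assoc]
  calc (1 / 2 : ℝ≥0∞) * ∫⁻ x in Ioo (0 : ℝ) 1, ∫⁻ y in Ioo (0 : ℝ) 1,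
        ENNReal.ofReal ((wgt r (x + y) - wgt r x - wgt r y) * (k x y * ψ x * ψ y))
      ≤ (1 / 2 : ℝ≥0∞) * (ENNReal.ofReal (2 * B) * I * I) := mul_le_mul_right houter _
    _ = ENNReal.ofReal B * I * I := hhalf
    _ ≤ ENNReal.ofReal B * J * J := by gcongr
    _ = ENNReal.ofReal B * J ^ 2 := by rw [sq, mul_assoc]
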